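/- Let Φ ∈ ℝ^{np×n} be (n-stacked) q-error correctable, and for each time k let ẑ(k) = Φx(k) + v(k) + e(k) where e(k) ∈ Σ_qⁿ and each block of v(k) satisfies ‖v_i(k)‖₂ ≤ v_max(k). Fix an integer r with q ≤ r ≤ 2q. If at each k the estimate x̂(k) is produced so that |{i ∈ {1,…,p} : ‖ẑ_i(k) − Φ_{Γᵢⁿ}x̂(k)‖₂ > ϑ_{p,q,r}(Φ)·v_max(k)}| ≤ q (as guaranteed by either the calculator step or the minimizer step of the decoder), then ‖x̂(k) − x(k)‖₂ ≤ κ^c_{p,q,r}(Φ)·v_max(k) for all k ≥ 0. -/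

import Mathlib

open scoped Classical
open Finset Matrix

noncomputable section

namespace SecureEst

variable {n p : ℕ}

/-- The `i`-th `n`-block of an `n`-stacked vector. -/
def blk (z : Fin p × Fin n → ℝ) (i : Fin p) : Fin n → ℝ := fun j => z (i, j)

/-- The `n`-stacked support of a stacked vector. -/
def blockSupp (z : Fin p × Fin n → ℝ) : Finset (Fin p) :=
  Finset.univ.filter fun i => blk z i ≠ 0

/-- The `n`-stacked ℓ⁰ "norm": number of nonzero blocks. -/
def l0n (z : Fin p × Fin n → ℝ) : ℕ := (blockSupp z).card

/-- `n`-stacked `q`-sparsity: membership in `Σ_qⁿ`. -/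
def Sparse (q : ℕ) (z : Fin p × Fin n → ℝ) : Prop := l0n z ≤ q

/-- Euclidean (ℓ²) norm of a real vector. -/
def euclNorm {m : Type*} [Fintype m] (x : m → ℝ) : ℝ := Real.sqrt (∑ i, x i ^ 2)

/-- `Φ_{Λⁿ}`: zero out the row-blocks of `Φ` outside `Λ`. -/
def zeroB (Λ : Finset (Fin p)) (Φ : Matrix (Fin p × Fin n) (Fin n) ℝ) :
    Matrix (Fin p × Fin n) (Fin n) ℝ :=
  fun ij k => if ij.1 ∈ Λ then Φ ij k else 0

/-- `z_{Λⁿ}`: zero out the blocks of a stacked vector outside `Λ`. -/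
def zeroV (Λ : Finset (Fin p)) (z : Fin p × Fin n → ℝ) : Fin p × Fin n → ℝ :=
  fun ij => if ij.1 ∈ Λ then z ij else 0

/-- `Φ_{Γᵢⁿ}`: the `i`-th row-block of `Φ`. -/
def rowBlk (Φ : Matrix (Fin p × Fin n) (Fin n) ℝ) (i : Fin p) :
    Matrix (Fin n) (Fin n) ℝ := fun j k => Φ (i, j) k

/-- Moore–Penrose pseudoinverse (full-column-rank formula `(MᵀM)⁻¹Mᵀ`). -/
def pinv {m k : Type*} [Fintype m] [Fintype k] [DecidableEq k]
    (M : Matrix m k ℝ) : Matrix k m ℝ := (Mᵀ * M)⁻¹ * Mᵀ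

/-- Spectral norm (largest singular value) of a real matrix. -/
def specNorm {m k : Type*} [Fintype m] [Fintype k] (M : Matrix m k ℝ) : ℝ :=
  sSup {r | ∃ x : k → ℝ, euclNorm x = 1 ∧ r = euclNorm (M.mulVec x)}

/-- Minimum singular value of a (tall) real matrix. -/
def sigmaMin {m k : Type*} [Fintype m] [Fintype k] (M : Matrix m k ℝ) : ℝ :=
  sInf {r | ∃ x : k → ℝ, euclNorm x = 1 ∧ r = euclNorm (M.mulVec x)}

/-- `(n-stacked) q`-error detectability. -/
def ErrDetectable (Φ : Matrix (Fin p × Fin n) (Fin n) ℝ) (q : ℕ) : Prop :=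
  ∀ x x' : Fin n → ℝ, ∀ e : Fin p × Fin n → ℝ,
    Sparse q e → Φ.mulVec x + e = Φ.mulVec x' → x = x'

/-- `(n-stacked) q`-error correctability. -/
def ErrCorrectable (Φ : Matrix (Fin p × Fin n) (Fin n) ℝ) (q : ℕ) : Prop :=
  ∀ x₁ x₂ : Fin n → ℝ, ∀ e₁ e₂ : Fin p × Fin n → ℝ,
    Sparse q e₁ → Sparse q e₂ →
      Φ.mulVec x₁ + e₁ = Φ.mulVec x₂ + e₂ → x₁ = x₂

/-- `(n-stacked)` cospark. -/
def cosparkN (Φ : Matrix (Fin p × Fin n) (Fin n) ℝ) : ℕ :=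
  sInf {m : ℕ | ∃ x : Fin n → ℝ, x ≠ 0 ∧ m = l0n (Φ.mulVec x)}

/-- `ρ_{p,q}(Φ)`. -/
def rho (Φ : Matrix (Fin p × Fin n) (Fin n) ℝ) (q : ℕ) : ℝ :=
  sInf {r | ∃ Λ : Finset (Fin p), Λ.card = p - q ∧ r = sigmaMin (zeroB Λ Φ)}

/-- `η_{p,q}(Φ)`. -/
def eta (Φ : Matrix (Fin p × Fin n) (Fin n) ℝ) (q : ℕ) : ℝ :=
  sSup {r | ∃ Λ : Finset (Fin p), Λ.card = p - q ∧
    ∃ i : Fin p, i ∉ Λ ∧ r = specNorm (rowBlk Φ i * pinv (zeroB Λ Φ))}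

/-- `κ^d_{p,q}(Φ)`. -/
def kappaD (Φ : Matrix (Fin p × Fin n) (Fin n) ℝ) (q : ℕ) : ℝ :=
  (Real.sqrt (p : ℝ) + 1) * Real.sqrt ((p - q : ℕ) : ℝ) / rho Φ q

/-- `κ^e_{p,q}(Φ)`. -/
def kappaE (Φ : Matrix (Fin p × Fin n) (Fin n) ℝ) (q : ℕ) : ℝ :=
  (eta Φ q * Real.sqrt ((p - q : ℕ) : ℝ) + 1) * (Real.sqrt (p : ℝ) + 1)

/-- The finite candidate set `F_{p,r}(ẑ)`. -/
def Fset (Φ : Matrix (Fin p × Fin n) (Fin n) ℝ) (r : ℕ) (z : Fin p × Fin n → ℝ) :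
    Set (Fin n → ℝ) :=
  {χ | ∃ Λ : Finset (Fin p), Λ.card = p - r ∧
    χ = (pinv (zeroB Λ Φ)).mulVec (zeroV Λ z)}

/-- `η'_{p,q,r}(Φ)`. -/
def eta' (Φ : Matrix (Fin p × Fin n) (Fin n) ℝ) (q r : ℕ) : ℝ :=
  sSup {a | ∃ Λ : Finset (Fin p), Λ.card = p - q ∧
    a = sInf {b | ∃ Λ' : Finset (Fin p), Λ' ⊆ Λ ∧ Λ'.card = p - r ∧
      b = sSup {c | ∃ i ∈ Λ \ Λ',
        c = specNorm (rowBlk Φ i * pinv (zeroB Λ' Φ))}}}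

/-- `ϑ_{p,q,r}(Φ)`. -/
def theta (Φ : Matrix (Fin p × Fin n) (Fin n) ℝ) (q r : ℕ) : ℝ :=
  max (eta' Φ q r * Real.sqrt ((p - r : ℕ) : ℝ) + 1) (Real.sqrt ((p - r : ℕ) : ℝ))

/-- `κ^c_{p,q,r}(Φ)`. -/
def kappaC (Φ : Matrix (Fin p × Fin n) (Fin n) ℝ) (q r : ℕ) : ℝ :=
  (theta Φ q r + 1) * Real.sqrt ((p - 2 * q : ℕ) : ℝ) / rho Φ (2 * q)

/-- `κ^{c'}_{p,q,r}(Φ)`. -/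
def kappaC' (Φ : Matrix (Fin p × Fin n) (Fin n) ℝ) (q r : ℕ) : ℝ :=
  (theta Φ q r - 1) / sSup {c | ∃ i : Fin p, c = specNorm (rowBlk Φ i)}

/-- Stacked observability matrix `G` with row-blocks `Gᵢ = [cᵢᵀ (cᵢA)ᵀ ⋯ (cᵢAⁿ⁻¹)ᵀ]ᵀ`. -/
def obsG (A : Matrix (Fin n) (Fin n) ℝ) (C : Matrix (Fin p) (Fin n) ℝ) :
    Matrix (Fin p × Fin n) (Fin n) ℝ :=
  fun ij k => (C * A ^ (ij.2 : ℕ)) ij.1 k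

/-- `C_Λ`: zero out the rows of `C` outside `Λ`. -/
def zeroRows (Λ : Finset (Fin p)) (C : Matrix (Fin p) (Fin n) ℝ) :
    Matrix (Fin p) (Fin n) ℝ :=
  fun i k => if i ∈ Λ then C i k else 0

/-- Observability of the pair `(A, C)`: the observability matrix has full column rank. -/
def Observable (A : Matrix (Fin n) (Fin n) ℝ) (C : Matrix (Fin p) (Fin n) ℝ) : Prop :=
  (obsG A C).rank = n

/-- `q`-redundant observability. -/
def RedObservable (A : Matrix (Fin n) (Fin n) ℝ) (C : Matrix (Fin p) (Fin n) ℝ)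
    (q : ℕ) : Prop :=
  ∀ Λ : Finset (Fin p), p - q ≤ Λ.card → Observable A (zeroRows Λ C)

/-- Euclidean norm of a complex vector. -/
def enormC {m : Type*} [Fintype m] (v : m → ℂ) : ℝ :=
  Real.sqrt (∑ i, ‖v i‖ ^ 2)

/-- The set `V(A)` of normalized complex eigenvectors of a real matrix `A`. -/
def eigSet (A : Matrix (Fin n) (Fin n) ℝ) : Set (Fin n → ℂ) :=
  {v | (∃ μ : ℂ, (A.map Complex.ofReal).mulVec v = μ • v) ∧ enormC v = 1}

/-- ℓ⁰ norm of a complex vector. -/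
def l0C (y : Fin p → ℂ) : ℕ := (Finset.univ.filter fun i => y i ≠ 0).card

/-- `n`-stacked ℓ⁰ norm of a complex stacked vector. -/
def l0nC (z : Fin p × Fin n → ℂ) : ℕ :=
  (Finset.univ.filter fun i => (fun j => z (i, j)) ≠ (0 : Fin n → ℂ)).card

/-- The dynamic security index `α_d(A, C)`. -/
def alphaD (A : Matrix (Fin n) (Fin n) ℝ) (C : Matrix (Fin p) (Fin n) ℝ) : ℕ :=
  sInf {m : ℕ | ∃ v ∈ eigSet A, m = l0C ((C.map Complex.ofReal).mulVec v)}

end SecureEst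

/-!
Put `d = x̂ - x`. Outside the at most `q` blocks with a large residual and the at most `q`
blocks hit by the attack, `Φ_{Γᵢⁿ} d = vᵢ - (ẑᵢ - Φ_{Γᵢⁿ} x̂)`, so each such block has norm at
most `(ϑ + 1) v_max`. Keeping `p - 2q` of these blocks gives a `Λ` with
`ρ_{p,2q} ‖d‖ ≤ σ_min(Φ_{Λⁿ}) ‖d‖ ≤ ‖Φ_{Λⁿ} d‖ ≤ √(p - 2q) (ϑ + 1) v_max`. Finally
`ρ_{p,2q} > 0`: a vector `Φ d` supported on `2q` blocks is a difference of two `q`-sparse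
vectors, so `q`-error correctability makes every `Φ_{Λⁿ}` with `|Λ| = p - 2q` injective.
-/

namespace SecureEst

section EuclNorm

variable {m : Type*} [Fintype m]

theorem euclNorm_eq_norm (x : m → ℝ) :
    euclNorm x = ‖(WithLp.toLp 2 x : EuclideanSpace ℝ m)‖ := by
  simp [euclNorm, EuclideanSpace.norm_eq]

theorem euclNorm_nonneg (x : m → ℝ) : 0 ≤ euclNorm x :=
  Real.sqrt_nonneg _

theorem euclNorm_smul (c : ℝ) (x : m → ℝ) : euclNorm (c • x) = |c| * euclNorm x := by
  simp only [euclNorm_eq_norm, WithLp.toLp_smul, norm_smul, Real.norm_eq_abs]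

theorem euclNorm_sub_le (x y : m → ℝ) : euclNorm (x - y) ≤ euclNorm x + euclNorm y := by
  simpa only [euclNorm_eq_norm, WithLp.toLp_sub] using norm_sub_le _ _

theorem sq_euclNorm (x : m → ℝ) : euclNorm x ^ 2 = ∑ i, x i ^ 2 :=
  Real.sq_sqrt (Finset.sum_nonneg fun _ _ => sq_nonneg _)

end EuclNorm

section SigmaMin

variable {m k : Type*} [Fintype m] [Fintype k]

theorem sigmaMin_nonneg (M : Matrix m k ℝ) : 0 ≤ sigmaMin M :=
  Real.sInf_nonneg (by rintro r ⟨x, -, rfl⟩; exact euclNorm_nonneg _)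

theorem sigmaMin_mul_le (M : Matrix m k ℝ) (d : k → ℝ) :
    sigmaMin M * euclNorm d ≤ euclNorm (M *ᵥ d) := by
  rcases eq_or_ne (euclNorm d) 0 with hd | hd
  · rw [hd, mul_zero]
    exact euclNorm_nonneg _
  have hpos : 0 < euclNorm d := (euclNorm_nonneg d).lt_of_ne' hd
  have hunit : sigmaMin M ≤ euclNorm (M *ᵥ ((euclNorm d)⁻¹ • d)) :=
    csInf_le ⟨0, by rintro r ⟨x, -, rfl⟩; exact euclNorm_nonneg _⟩
      ⟨_, by rw [euclNorm_smul, abs_inv, abs_of_pos hpos, inv_mul_cancel₀ hd], rfl⟩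
  rw [mulVec_smul, euclNorm_smul, abs_inv, abs_of_pos hpos] at hunit
  rwa [← le_div_iff₀ hpos, div_eq_inv_mul]

theorem sigmaMin_pos [Nonempty k] (M : Matrix m k ℝ) (hM : ∀ d, M *ᵥ d = 0 → d = 0) :
    0 < sigmaMin M := by
  classical
  obtain ⟨K, -, hK⟩ := (toLpLin 2 2 M).exists_antilipschitzWith <|
    LinearMap.ker_eq_bot'.mpr fun x hx => by
      simpa using congrArg (WithLp.toLp 2) (hM x.ofLp (by simpa using congrArg WithLp.ofLp hx))
  obtain ⟨c, hc, hle⟩ := antilipschitzWith_iff_exists_mul_le_norm.mp ⟨K, hK⟩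
  refine hc.trans_le (le_csInf ?_ ?_)
  · obtain ⟨i⟩ := ‹Nonempty k›
    exact ⟨_, Pi.single i 1, by simp [euclNorm_eq_norm], rfl⟩
  · rintro r ⟨x, hx, rfl⟩
    have h := hle (WithLp.toLp 2 x)
    rw [← euclNorm_eq_norm, hx, mul_one] at h
    simpa [euclNorm_eq_norm] using h

end SigmaMin

variable {n p : ℕ}

theorem sq_euclNorm_eq_sum_blk (z : Fin p × Fin n → ℝ) :
    euclNorm z ^ 2 = ∑ i, euclNorm (blk z i) ^ 2 := by
  simp only [sq_euclNorm, Fintype.sum_prod_type, blk]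

theorem euclNorm_le_sqrt_card_mul {z : Fin p × Fin n → ℝ} {Λ : Finset (Fin p)} {C : ℝ}
    (hout : ∀ i ∉ Λ, blk z i = 0) (hin : ∀ i ∈ Λ, euclNorm (blk z i) ≤ C) :
    euclNorm z ≤ √(Λ.card : ℝ) * C := by
  rcases Λ.eq_empty_or_nonempty with rfl | ⟨i₀, hi₀⟩
  · have hz : z = 0 := funext fun ij => congrFun (hout ij.1 (Finset.notMem_empty _)) ij.2
    simp [hz, euclNorm]
  have hC : 0 ≤ C := (euclNorm_nonneg _).trans (hin i₀ hi₀)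
  refine (pow_le_pow_iff_left₀ (euclNorm_nonneg z) (by positivity) two_ne_zero).mp ?_
  calc euclNorm z ^ 2 = ∑ i ∈ Λ, euclNorm (blk z i) ^ 2 := by
        rw [sq_euclNorm_eq_sum_blk]
        exact (Finset.sum_subset (Finset.subset_univ Λ) fun i _ hi => by
          simp [hout i hi, euclNorm]).symm
    _ ≤ ∑ _ ∈ Λ, C ^ 2 :=
        Finset.sum_le_sum fun i hi => pow_le_pow_left₀ (euclNorm_nonneg _) (hin i hi) 2
    _ = (√(Λ.card : ℝ) * C) ^ 2 := by
        rw [Finset.sum_const, nsmul_eq_mul, mul_pow, Real.sq_sqrt (Nat.cast_nonneg _)]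

theorem blk_zeroV (Λ : Finset (Fin p)) (z : Fin p × Fin n → ℝ) (i : Fin p) :
    blk (zeroV Λ z) i = if i ∈ Λ then blk z i else 0 := by
  split_ifs with h <;> ext j <;> simp [blk, zeroV, h]

theorem blk_zeroB_mulVec (Λ : Finset (Fin p)) (Φ : Matrix (Fin p × Fin n) (Fin n) ℝ)
    (d : Fin n → ℝ) (i : Fin p) :
    blk (zeroB Λ Φ *ᵥ d) i = if i ∈ Λ then rowBlk Φ i *ᵥ d else 0 := by
  split_ifs with h <;> ext j <;> simp [blk, zeroB, rowBlk, mulVec, dotProduct, h]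

theorem blockSupp_zeroV (Λ : Finset (Fin p)) (z : Fin p × Fin n → ℝ) :
    blockSupp (zeroV Λ z) = blockSupp z ∩ Λ := by
  ext i
  by_cases h : i ∈ Λ <;> simp [blockSupp, blk_zeroV, h]

theorem blockSupp_neg (z : Fin p × Fin n → ℝ) : blockSupp (-z) = blockSupp z := by
  ext i
  simp only [blockSupp, Finset.mem_filter]
  exact and_congr_right fun _ => neg_ne_zero (a := blk z i)

theorem zeroV_add_zeroV_compl (Λ : Finset (Fin p)) (z : Fin p × Fin n → ℝ) :
    zeroV Λ z + zeroV Λᶜ z = z := by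
  ext ij
  by_cases h : ij.1 ∈ Λ <;> simp [zeroV, h]

theorem Sparse.exists_sub {q₁ q₂ : ℕ} {z : Fin p × Fin n → ℝ} (hz : Sparse (q₁ + q₂) z) :
    ∃ e₁ e₂, Sparse q₁ e₁ ∧ Sparse q₂ e₂ ∧ z = e₁ - e₂ := by
  obtain ⟨A, hAS, hA⟩ := Finset.exists_subset_card_eq (min_le_right q₁ (blockSupp z).card)
  refine ⟨zeroV A z, -zeroV Aᶜ z, ?_, ?_, by rw [sub_neg_eq_add, zeroV_add_zeroV_compl]⟩
  · unfold Sparse l0n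
    rw [blockSupp_zeroV]
    exact (Finset.card_le_card Finset.inter_subset_right).trans (hA.le.trans (min_le_left _ _))
  · unfold Sparse l0n at hz ⊢
    rw [blockSupp_neg, blockSupp_zeroV, ← Finset.sdiff_eq_inter_compl,
      Finset.card_sdiff_of_subset hAS]
    omega

theorem ErrCorrectable.eq_zero_of_sparse {Φ : Matrix (Fin p × Fin n) (Fin n) ℝ} {q : ℕ}
    (hc : ErrCorrectable Φ q) {d : Fin n → ℝ} (hd : Sparse (2 * q) (Φ *ᵥ d)) : d = 0 := by
  rw [two_mul] at hd
  obtain ⟨e₁, e₂, h₁, h₂, he⟩ := hd.exists_sub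
  exact hc d 0 e₂ e₁ h₂ h₁ (by rw [mulVec_zero, zero_add, he, sub_add_cancel])

theorem ErrCorrectable.zeroB_mulVec_eq_zero {Φ : Matrix (Fin p × Fin n) (Fin n) ℝ} {q : ℕ}
    (hc : ErrCorrectable Φ q) {Λ : Finset (Fin p)} (hΛ : Λ.card = p - 2 * q)
    {d : Fin n → ℝ} (hd : zeroB Λ Φ *ᵥ d = 0) : d = 0 := by
  refine hc.eq_zero_of_sparse ?_
  have hsupp : blockSupp (Φ *ᵥ d) ⊆ Λᶜ := fun i hi => Finset.mem_compl.mpr fun hiΛ => by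
    have h := congrArg (blk · i) hd
    simp only [blk_zeroB_mulVec, if_pos hiΛ] at h
    exact (Finset.mem_filter.mp hi).2 h
  unfold Sparse l0n
  refine (Finset.card_le_card hsupp).trans ?_
  rw [Finset.card_compl, Fintype.card_fin]
  omega

theorem rho_nonneg (Φ : Matrix (Fin p × Fin n) (Fin n) ℝ) (m : ℕ) : 0 ≤ rho Φ m :=
  Real.sInf_nonneg (by rintro r ⟨Λ, -, rfl⟩; exact sigmaMin_nonneg _)

theorem rho_le_sigmaMin (Φ : Matrix (Fin p × Fin n) (Fin n) ℝ) {m : ℕ} {Λ : Finset (Fin p)}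
    (hΛ : Λ.card = p - m) : rho Φ m ≤ sigmaMin (zeroB Λ Φ) :=
  csInf_le ⟨0, by rintro r ⟨Λ, -, rfl⟩; exact sigmaMin_nonneg _⟩ ⟨Λ, hΛ, rfl⟩

theorem ErrCorrectable.rho_pos [Nonempty (Fin n)] {Φ : Matrix (Fin p × Fin n) (Fin n) ℝ}
    {q : ℕ} (hc : ErrCorrectable Φ q) : 0 < rho Φ (2 * q) := by
  obtain ⟨Λ₀, -, hΛ₀⟩ := Finset.exists_subset_card_eq (s := (Finset.univ : Finset (Fin p)))
    (n := p - 2 * q) (by rw [Finset.card_univ, Fintype.card_fin]; omega)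
  have hfin :
      {r | ∃ Λ : Finset (Fin p), Λ.card = p - 2 * q ∧ r = sigmaMin (zeroB Λ Φ)}.Finite :=
    (Set.finite_range fun Λ : Finset (Fin p) => sigmaMin (zeroB Λ Φ)).subset
      (by rintro r ⟨Λ, -, rfl⟩; exact ⟨Λ, rfl⟩)
  obtain ⟨Λ, hΛ, hrho⟩ := Set.Nonempty.csInf_mem (by exact ⟨_, Λ₀, hΛ₀, rfl⟩) hfin
  rw [rho, hrho]
  exact sigmaMin_pos _ fun d => hc.zeroB_mulVec_eq_zero hΛ

theorem rho_mul_euclNorm_le {Φ : Matrix (Fin p × Fin n) (Fin n) ℝ} {q : ℕ}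
    {S : Finset (Fin p)} (hS : S.card ≤ 2 * q) {d : Fin n → ℝ} {C : ℝ}
    (hd : ∀ i ∉ S, euclNorm (rowBlk Φ i *ᵥ d) ≤ C) :
    rho Φ (2 * q) * euclNorm d ≤ √((p - 2 * q : ℕ) : ℝ) * C := by
  obtain ⟨Λ, hΛS, hΛ⟩ := Finset.exists_subset_card_eq (s := Sᶜ) (n := p - 2 * q)
    (by rw [Finset.card_compl, Fintype.card_fin]; omega)
  calc rho Φ (2 * q) * euclNorm d ≤ sigmaMin (zeroB Λ Φ) * euclNorm d :=
        mul_le_mul_of_nonneg_right (rho_le_sigmaMin Φ hΛ) (euclNorm_nonneg _)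
    _ ≤ euclNorm (zeroB Λ Φ *ᵥ d) := sigmaMin_mul_le _ _
    _ ≤ √(Λ.card : ℝ) * C :=
        euclNorm_le_sqrt_card_mul (fun i hi => by rw [blk_zeroB_mulVec, if_neg hi])
          fun i hi => by
            rw [blk_zeroB_mulVec, if_pos hi]
            exact hd i (Finset.mem_compl.mp (hΛS hi))
    _ = √((p - 2 * q : ℕ) : ℝ) * C := by rw [hΛ]

theorem ErrCorrectable.euclNorm_le_of_rowBlk_le {Φ : Matrix (Fin p × Fin n) (Fin n) ℝ}
    {q : ℕ} (hc : ErrCorrectable Φ q) {S : Finset (Fin p)} (hS : S.card ≤ 2 * q)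
    {d : Fin n → ℝ} {C : ℝ} (hd : ∀ i ∉ S, euclNorm (rowBlk Φ i *ᵥ d) ≤ C) :
    euclNorm d ≤ √((p - 2 * q : ℕ) : ℝ) * C / rho Φ (2 * q) := by
  have key := rho_mul_euclNorm_le hS hd
  cases isEmpty_or_nonempty (Fin n)
  · have hd0 : euclNorm d = 0 := by simp [euclNorm]
    rw [hd0, mul_zero] at key
    rw [hd0]
    exact div_nonneg key (rho_nonneg _ _)
  · rw [le_div_iff₀ hc.rho_pos, mul_comm]
    exact key

theorem ErrCorrectable.euclNorm_sub_le_of_residual_count_le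
    {Φ : Matrix (Fin p × Fin n) (Fin n) ℝ} {q : ℕ} (hc : ErrCorrectable Φ q)
    {x xhat : Fin n → ℝ} {e v z : Fin p × Fin n → ℝ} {τ vmax : ℝ}
    (he : Sparse q e) (hv : ∀ i, euclNorm (blk v i) ≤ vmax) (hz : z = Φ *ᵥ x + v + e)
    (hcount : (Finset.univ.filter fun i : Fin p =>
        τ * vmax < euclNorm (blk z i - rowBlk Φ i *ᵥ xhat)).card ≤ q) :
    euclNorm (xhat - x) ≤ (τ + 1) * √((p - 2 * q : ℕ) : ℝ) / rho Φ (2 * q) * vmax := by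
  set B := Finset.univ.filter fun i : Fin p =>
    τ * vmax < euclNorm (blk z i - rowBlk Φ i *ᵥ xhat)
  have hS : (B ∪ blockSupp e).card ≤ 2 * q :=
    (Finset.card_union_le _ _).trans (by unfold Sparse l0n at he; omega)
  have hgood : ∀ i ∉ B ∪ blockSupp e,
      euclNorm (rowBlk Φ i *ᵥ (xhat - x)) ≤ (τ + 1) * vmax := by
    intro i hi
    rw [Finset.mem_union, not_or] at hi
    have hres : euclNorm (blk z i - rowBlk Φ i *ᵥ xhat) ≤ τ * vmax :=
      not_lt.mp fun h => hi.1 (Finset.mem_filter.mpr ⟨Finset.mem_univ i, h⟩)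
    have hei : blk e i = 0 := by simpa [blockSupp] using hi.2
    have hzi : blk z i = rowBlk Φ i *ᵥ x + blk v i := by
      rw [hz, ← add_zero (_ + blk v i), ← hei]
      rfl
    calc euclNorm (rowBlk Φ i *ᵥ (xhat - x))
        = euclNorm (blk v i - (blk z i - rowBlk Φ i *ᵥ xhat)) := by
          rw [hzi, mulVec_sub]
          abel_nf
      _ ≤ vmax + τ * vmax := (euclNorm_sub_le _ _).trans (add_le_add (hv i) hres)
      _ = (τ + 1) * vmax := by ring
  calc euclNorm (xhat - x) ≤ √((p - 2 * q : ℕ) : ℝ) * ((τ + 1) * vmax) / rho Φ (2 * q) :=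
        hc.euclNorm_le_of_rowBlk_le hS hgood
    _ = (τ + 1) * √((p - 2 * q : ℕ) : ℝ) / rho Φ (2 * q) * vmax := by ring

end SecureEst

open SecureEst in
theorem decoder_resilient_estimation_general {n p : ℕ}
    (Φ : Matrix (Fin p × Fin n) (Fin n) ℝ) (q r : ℕ)
    (hc : ErrCorrectable Φ q)
    (x : ℕ → Fin n → ℝ) (e v zhat : ℕ → Fin p × Fin n → ℝ)
    (vmax : ℕ → ℝ) (xhat : ℕ → Fin n → ℝ)
    (he : ∀ k : ℕ, Sparse q (e k))
    (hv : ∀ k : ℕ, ∀ i : Fin p, euclNorm (blk (v k) i) ≤ vmax k)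
    (hz : ∀ k : ℕ, zhat k = Φ.mulVec (x k) + v k + e k)
    (hcount : ∀ k : ℕ, (Finset.univ.filter fun i : Fin p =>
        theta Φ q r * vmax k <
          euclNorm (blk (zhat k) i - (rowBlk Φ i).mulVec (xhat k))).card ≤ q) :
    ∀ k : ℕ, euclNorm (xhat k - x k) ≤ kappaC Φ q r * vmax k := fun k =>
  hc.euclNorm_sub_le_of_residual_count_le (he k) (hv k) (hz k) (hcount k)

open SecureEst in
/-- Theorem 5: at every time `k`, if the decoder's estimate `xhat(k)`
leaves at most `q` blocks with residual larger than `ϑ_{p,q,r}(Φ)·v_max(k)`, then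
`‖xhat(k) − x(k)‖₂ ≤ κ^c_{p,q,r}(Φ)·v_max(k)`. -/
theorem decoder_resilient_estimation {n p : ℕ}
    (Φ : Matrix (Fin p × Fin n) (Fin n) ℝ) (q r : ℕ)
    (hc : ErrCorrectable Φ q) (hqr : q ≤ r) (hr2q : r ≤ 2 * q)
    (x : ℕ → Fin n → ℝ) (e v zhat : ℕ → Fin p × Fin n → ℝ)
    (vmax : ℕ → ℝ) (xhat : ℕ → Fin n → ℝ)
    (he : ∀ k : ℕ, Sparse q (e k))
    (hv : ∀ k : ℕ, ∀ i : Fin p, euclNorm (blk (v k) i) ≤ vmax k)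
    (hz : ∀ k : ℕ, zhat k = Φ.mulVec (x k) + v k + e k)
    (hcount : ∀ k : ℕ, (Finset.univ.filter fun i : Fin p =>
        theta Φ q r * vmax k <
          euclNorm (blk (zhat k) i - (rowBlk Φ i).mulVec (xhat k))).card ≤ q) :
    ∀ k : ℕ, euclNorm (xhat k - x k) ≤ kappaC Φ q r * vmax k :=
  decoder_resilient_estimation_general Φ q r hc x e v zhat vmax xhat he hv hz hcount
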